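/- arXiv:2404.02996 — 3 statements merged into one kernel-verified Lean document; each statement's English description precedes it below -/
import Mathlib

section
/- Heuristic cuts are implied by the disaggregated formulation: if λ ∈ ℝ^m with λ ≥ 0, ν ∈ ℝⁿ and μ ∈ ℝ satisfy μ ≥ Σ_{i=1}^n νᵢ + λᵀ b and νᵢ ≥ fᵢ(X^kᵢ) − λᵀ Aᵢ X^kᵢ for all i ∈ {1,…,n} and k ∈ {1,…,j}, then μ ≥ f(x) + λᵀ(b − A x) for every recombination x of X¹,…,X^j. -/
open Matrix Finset

/-- Heuristic cuts are implied by the disaggregated formulation: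
if `λ ≥ 0`, `ν` and `μ` satisfy `μ ≥ Σ_i νᵢ + λᵀ b` and
`νᵢ ≥ fᵢ(X^kᵢ) − λᵀ Aᵢ X^kᵢ` for all `i` and `k`, then
`μ ≥ f(x) + λᵀ(b − A x)` for every recombination `x` of `X¹,…,X^j`. -/
theorem stmt_10 (n d m : ℕ) (hn : 0 < n) (hd : 0 < d) (hm : 0 < m)
    (𝒳 : Fin n → Finset (Fin d → ℝ)) (h𝒳 : ∀ i, (𝒳 i).Nonempty)
    (fs : Fin n → (Fin d → ℝ) → ℝ)
    (As : Fin n → Matrix (Fin m) (Fin d) ℝ) (b : Fin m → ℝ)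
    (j : ℕ) (X : Fin j → (Fin n → Fin d → ℝ))
    (hX : ∀ k, X k ∈ Fintype.piFinset 𝒳)
    (lam : Fin m → ℝ) (hlam : 0 ≤ lam) (ν : Fin n → ℝ) (μ : ℝ)
    (hμ : (∑ i, ν i) + lam ⬝ᵥ b ≤ μ)
    (hν : ∀ i (k : Fin j),
      fs i (X k i) - lam ⬝ᵥ (As i).mulVec (X k i) ≤ ν i) :
    ∀ κ : Fin n → Fin j,
      (∑ i, fs i (X (κ i) i))
        + lam ⬝ᵥ (b - ∑ i, (As i).mulVec (X (κ i) i)) ≤ μ := by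
  intro κ
  have hd : lam ⬝ᵥ (b - ∑ i, (As i).mulVec (X (κ i) i))
      = lam ⬝ᵥ b - ∑ i, lam ⬝ᵥ (As i).mulVec (X (κ i) i) := by
    rw [dotProduct_sub]
    congr 1
    simp only [dotProduct, Finset.sum_apply, Finset.mul_sum]
    exact Finset.sum_comm
  rw [hd]
  have hsum : ∑ i, (fs i (X (κ i) i) - lam ⬝ᵥ (As i).mulVec (X (κ i) i)) ≤ ∑ i, ν i :=
    Finset.sum_le_sum fun i _ => hν i (κ i)
  rw [Finset.sum_sub_distrib] at hsum
  linarith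
end

section
/- Projection characterization of the disaggregated feasible set: for λ ∈ ℝ^m with λ ≥ 0 and μ ∈ ℝ, the following are equivalent: (i) there exists ν ∈ ℝⁿ with μ ≥ Σ_{i=1}^n νᵢ + λᵀ b and νᵢ ≥ fᵢ(X^kᵢ) − λᵀ Aᵢ X^kᵢ for all i ∈ {1,…,n} and k ∈ {1,…,j}; (ii) μ ≥ Σ_{i=1}^n max_{1 ≤ k ≤ j} ( fᵢ(X^kᵢ) − λᵀ Aᵢ X^kᵢ ) + λᵀ b; (iii) μ ≥ f(x) + λᵀ(b − A x) for every recombination x of X¹,…,X^j. -/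
open Matrix Finset

/-- Projection characterization of the disaggregated feasible
set: for `λ ≥ 0` and `μ ∈ ℝ`, the existence of `ν` satisfying the
disaggregated constraints is equivalent to
`μ ≥ Σ_i max_k ( fᵢ(X^kᵢ) − λᵀ Aᵢ X^kᵢ ) + λᵀ b`, which in turn is
equivalent to `μ ≥ f(x) + λᵀ(b − A x)` for every recombination `x`. -/
theorem stmt_11 (n d m : ℕ) (hn : 0 < n) (hd : 0 < d) (hm : 0 < m)
    (𝒳 : Fin n → Finset (Fin d → ℝ)) (h𝒳 : ∀ i, (𝒳 i).Nonempty)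
    (fs : Fin n → (Fin d → ℝ) → ℝ)
    (As : Fin n → Matrix (Fin m) (Fin d) ℝ) (b : Fin m → ℝ)
    (j : ℕ) (hj : 0 < j) (X : Fin j → (Fin n → Fin d → ℝ))
    (hX : ∀ k, X k ∈ Fintype.piFinset 𝒳)
    (lam : Fin m → ℝ) (hlam : 0 ≤ lam) (μ : ℝ) :
    ((∃ ν : Fin n → ℝ, (∑ i, ν i) + lam ⬝ᵥ b ≤ μ ∧
        ∀ i (k : Fin j), fs i (X k i) - lam ⬝ᵥ (As i).mulVec (X k i) ≤ ν i) ↔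
      (∑ i, (Finset.univ : Finset (Fin j)).sup' ⟨⟨0, hj⟩, Finset.mem_univ _⟩
          (fun k => fs i (X k i) - lam ⬝ᵥ (As i).mulVec (X k i)))
        + lam ⬝ᵥ b ≤ μ) ∧
    ((∑ i, (Finset.univ : Finset (Fin j)).sup' ⟨⟨0, hj⟩, Finset.mem_univ _⟩
          (fun k => fs i (X k i) - lam ⬝ᵥ (As i).mulVec (X k i)))
        + lam ⬝ᵥ b ≤ μ ↔
      ∀ κ : Fin n → Fin j,
        (∑ i, fs i (X (κ i) i))
          + lam ⬝ᵥ (b - ∑ i, (As i).mulVec (X (κ i) i)) ≤ μ) := by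
  set g : Fin n → Fin j → ℝ :=
    fun i k => fs i (X k i) - lam ⬝ᵥ (As i).mulVec (X k i) with hg
  have hne : ((Finset.univ : Finset (Fin j)).Nonempty) :=
    ⟨⟨0, hj⟩, Finset.mem_univ _⟩
  have key : ∀ κ : Fin n → Fin j,
      (∑ i, fs i (X (κ i) i))
        + lam ⬝ᵥ (b - ∑ i, (As i).mulVec (X (κ i) i))
      = (∑ i, g i (κ i)) + lam ⬝ᵥ b := by
    intro κ
    have : lam ⬝ᵥ (b - ∑ i, (As i).mulVec (X (κ i) i))
        = lam ⬝ᵥ b - ∑ i, lam ⬝ᵥ (As i).mulVec (X (κ i) i) := by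
      rw [dotProduct_sub]
      congr 1
      simp only [dotProduct, Finset.sum_apply, Finset.mul_sum]
      exact Finset.sum_comm
    rw [this, hg]
    simp [Finset.sum_sub_distrib]
    ring
  constructor
  · constructor
    · rintro ⟨ν, hsum, hν⟩
      refine le_trans (by gcongr with i _; exact Finset.sup'_le _ _ fun k _ => hν i k) hsum
    · intro h
      exact ⟨fun i => (Finset.univ : Finset (Fin j)).sup' hne (g i), h,
        fun i k => Finset.le_sup' (g i) (Finset.mem_univ k)⟩
  · constructor
    · intro h κ
      rw [key κ]
      refine le_trans ?_ h
      gcongr with i _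
      exact Finset.le_sup' (g i) (Finset.mem_univ (κ i))
    · intro h
      have : ∀ i, ∃ k : Fin j, (Finset.univ : Finset (Fin j)).sup' hne (g i) = g i k := by
        intro i
        obtain ⟨k, _, hk⟩ := Finset.exists_mem_eq_sup' hne (g i)
        exact ⟨k, hk⟩
      choose κ hκ using this
      have := h κ
      rw [key κ] at this
      refine le_trans (le_of_eq ?_) this
      congr 1
      exact Finset.sum_congr rfl fun i _ => hκ i
end

section
/- After adding the aggregated cuts for all recombinations, the aggregated bound equals the disaggregated bound: if Y¹,…,Y^{jⁿ} is an enumeration of all recombinations of X¹,…,X^j (one for each tuple in {1,…,j}ⁿ), then val(Y¹,…,Y^{jⁿ}) = val_D(X¹,…,X^j). -/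
open Matrix Finset

lemma dot_split {n m : ℕ} (lam bb : Fin m → ℝ) (v : Fin n → Fin m → ℝ) :
    lam ⬝ᵥ (bb - ∑ i, v i) = lam ⬝ᵥ bb - ∑ i, lam ⬝ᵥ v i := by
  simp only [dotProduct, Pi.sub_apply, Finset.sum_apply, mul_sub, Finset.mul_sum,
    Finset.sum_sub_distrib]
  rw [Finset.sum_comm]

/-- After adding the aggregated cuts for all `jⁿ` recombinations
(one for each tuple `κ ∈ {1,…,j}ⁿ`), the aggregated cutting-plane bound equals
the disaggregated bound: `val(Y¹,…,Y^{jⁿ}) = val_D(X¹,…,X^j)`. -/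
theorem stmt_13 (n d m : ℕ) (hn : 0 < n) (hd : 0 < d) (hm : 0 < m)
    (𝒳 : Fin n → Finset (Fin d → ℝ)) (h𝒳 : ∀ i, (𝒳 i).Nonempty)
    (fs : Fin n → (Fin d → ℝ) → ℝ)
    (As : Fin n → Matrix (Fin m) (Fin d) ℝ) (b : Fin m → ℝ)
    (j : ℕ) (X : Fin j → (Fin n → Fin d → ℝ))
    (hX : ∀ k, X k ∈ Fintype.piFinset 𝒳)
    (Y : (Fin n → Fin j) → (Fin n → Fin d → ℝ))
    (hY : ∀ κ : Fin n → Fin j, Y κ = fun i => X (κ i) i) :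
    sInf {μ : ℝ | ∃ lam : Fin m → ℝ, 0 ≤ lam ∧
        ∀ κ : Fin n → Fin j, (∑ i, fs i (Y κ i))
          + lam ⬝ᵥ (b - ∑ i, (As i).mulVec (Y κ i)) ≤ μ}
      = sInf {μ : ℝ | ∃ lam : Fin m → ℝ, ∃ ν : Fin n → ℝ, 0 ≤ lam ∧
        (∑ i, ν i) + lam ⬝ᵥ b ≤ μ ∧
        ∀ i (k : Fin j), fs i (X k i) - lam ⬝ᵥ (As i).mulVec (X k i) ≤ ν i} := by
  congr 1
  ext μ
  simp only [Set.mem_setOf_eq]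
  constructor
  · rintro ⟨lam, hlam, h⟩
    rcases Nat.eq_zero_or_pos j with hj | hj
    · subst hj
      refine ⟨lam, fun _ => (μ - lam ⬝ᵥ b) / n, hlam, ?_, fun i k => k.elim0⟩
      have : (∑ _i : Fin n, (μ - lam ⬝ᵥ b) / n) = μ - lam ⬝ᵥ b := by
        rw [Finset.sum_const, Finset.card_univ, Fintype.card_fin, nsmul_eq_mul]
        field_simp
      rw [this]; linarith
    · set g : Fin n → Fin j → ℝ :=
        fun i k => fs i (X k i) - lam ⬝ᵥ (As i).mulVec (X k i) with hg
      have hex : ∀ i : Fin n, ∃ k : Fin j, ∀ k' : Fin j, g i k' ≤ g i k := by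
        intro i
        haveI : Nonempty (Fin j) := ⟨⟨0, hj⟩⟩
        obtain ⟨k, -, hk⟩ := Finset.exists_max_image (univ : Finset (Fin j)) (g i)
          univ_nonempty
        exact ⟨k, fun k' => hk k' (mem_univ _)⟩
      choose κ hκ using hex
      refine ⟨lam, fun i => g i (κ i), hlam, ?_, fun i k => hκ i k⟩
      have hc := h κ
      rw [hY κ, dot_split] at hc
      have : (∑ i, g i (κ i)) + lam ⬝ᵥ b
          = (∑ i, fs i (X (κ i) i)) + (lam ⬝ᵥ b - ∑ i, lam ⬝ᵥ (As i).mulVec (X (κ i) i)) := by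
        simp only [hg, Finset.sum_sub_distrib]; ring
      rw [this]
      exact hc
  · rintro ⟨lam, ν, hlam, hμ, hk⟩
    refine ⟨lam, hlam, fun κ => ?_⟩
    rw [hY κ, dot_split]
    have hsum : (∑ i, (fs i (X (κ i) i) - lam ⬝ᵥ (As i).mulVec (X (κ i) i))) ≤ ∑ i, ν i :=
      Finset.sum_le_sum fun i _ => hk i (κ i)
    rw [Finset.sum_sub_distrib] at hsum
    linarith
end
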